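/- The sets Π_n^* and Ω_n^* are equal: every n-tuple (μ_0, μ_1, ..., μ_{n-1}) of pairwise non-intersecting large Schröder paths with μ_i from (-2i,0) to (2i,0) consists entirely of small Schröder paths (no level steps on the x-axis). -/

import Mathlib

open Matrix

/-- A lattice point in the plane. -/
abbrev Pt := ℤ × ℤ

/-- The points visited by a path starting at `p` taking steps `l`. -/
def pts (p : Pt) (l : List Pt) : List Pt := l.scanl (· + ·) p

/-- The endpoint of a path starting at `p` taking steps `l`. -/
def endpt (p : Pt) (l : List Pt) : Pt := l.foldl (· + ·) p

/-- `l` is the step list of a large Schröder path from `p` to `q`: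
steps are U=(1,1), D=(1,-1), L=(2,0) and the path never goes below the x-axis. -/
def IsLargePath (p q : Pt) (l : List Pt) : Prop :=
  (∀ s ∈ l, s = (1, 1) ∨ s = (1, -1) ∨ s = (2, 0)) ∧
  (∀ v ∈ pts p l, 0 ≤ v.2) ∧
  endpt p l = q

/-- A small Schröder path: a large Schröder path with no level step on the x-axis. -/
def IsSmallPath (p q : Pt) (l : List Pt) : Prop :=
  IsLargePath p q l ∧
  ∀ (i : ℕ) (h : i < l.length), l.get ⟨i, h⟩ = (2, 0) → (endpt p (l.take i)).2 ≠ 0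

/-- The `k`-th large Schröder number: the number of large Schröder paths
from `(0,0)` to `(2k,0)`. -/
noncomputable def schR (k : ℕ) : ℕ := Nat.card {l : List Pt // IsLargePath (0, 0) (2 * k, 0) l}

/-- The `k`-th small Schröder number: the number of small Schröder paths
from `(0,0)` to `(2k,0)`. -/
noncomputable def schS (k : ℕ) : ℕ := Nat.card {l : List Pt // IsSmallPath (0, 0) (2 * k, 0) l}

/-- `Π n`: `n`-tuples of pairwise non-intersecting large Schröder paths where the
`i`-th path (1-indexed; here index `i : Fin n` stands for `i+1`) runs from
`(-2(i+1)+1, 0)` to `(2(i+1)-1, 0)`. -/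
def PiSet (n : ℕ) : Set (Fin n → List Pt) :=
  {π | (∀ i : Fin n, IsLargePath (-(2 * (i : ℤ) + 1), 0) (2 * (i : ℤ) + 1, 0) (π i)) ∧
    ∀ i j : Fin n, i ≠ j → ∀ v ∈ pts (-(2 * (i : ℤ) + 1), 0) (π i),
      v ∉ pts (-(2 * (j : ℤ) + 1), 0) (π j)}

/-- `Ω n`: the analogous tuples of small Schröder paths. -/
def OmegaSet (n : ℕ) : Set (Fin n → List Pt) :=
  {ω | (∀ i : Fin n, IsSmallPath (-(2 * (i : ℤ) + 1), 0) (2 * (i : ℤ) + 1, 0) (ω i)) ∧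
    ∀ i j : Fin n, i ≠ j → ∀ v ∈ pts (-(2 * (i : ℤ) + 1), 0) (ω i),
      v ∉ pts (-(2 * (j : ℤ) + 1), 0) (ω j)}

/-- `Π* n`: `n`-tuples `(μ₀,…,μ_{n-1})` of pairwise non-intersecting large Schröder
paths with `μ i` from `(-2i,0)` to `(2i,0)`. -/
def PiStarSet (n : ℕ) : Set (Fin n → List Pt) :=
  {μ | (∀ i : Fin n, IsLargePath (-(2 * (i : ℤ)), 0) (2 * (i : ℤ), 0) (μ i)) ∧
    ∀ i j : Fin n, i ≠ j → ∀ v ∈ pts (-(2 * (i : ℤ)), 0) (μ i),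
      v ∉ pts (-(2 * (j : ℤ)), 0) (μ j)}

/-- `Ω* n`: the analogous tuples of small Schröder paths. -/
def OmegaStarSet (n : ℕ) : Set (Fin n → List Pt) :=
  {μ | (∀ i : Fin n, IsSmallPath (-(2 * (i : ℤ)), 0) (2 * (i : ℤ), 0) (μ i)) ∧
    ∀ i j : Fin n, i ≠ j → ∀ v ∈ pts (-(2 * (i : ℤ)), 0) (μ i),
      v ∉ pts (-(2 * (j : ℤ)), 0) (μ j)}

/-- The unit square with lower-left corner `c` lies in the Aztec diamond `Az(n)`,
i.e. all four of its corners `(x,y)` satisfy `|x| + |y| ≤ n + 1`. -/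
def aztecCell (n : ℕ) (c : Pt) : Prop :=
  |c.1| + |c.2| ≤ (n : ℤ) + 1 ∧ |c.1 + 1| + |c.2| ≤ (n : ℤ) + 1 ∧
  |c.1| + |c.2 + 1| ≤ (n : ℤ) + 1 ∧ |c.1 + 1| + |c.2 + 1| ≤ (n : ℤ) + 1

/-- Two unit squares (given by lower-left corners) are edge-adjacent,
so together they form a 1×2 or 2×1 domino. -/
def adjCell (c d : Pt) : Prop :=
  d = (c.1 + 1, c.2) ∨ d = (c.1 - 1, c.2) ∨ d = (c.1, c.2 + 1) ∨ d = (c.1, c.2 - 1)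

/-- A domino tiling of `Az(n)`, encoded as the involution matching each cell of the
diamond with the other cell of its domino (and fixing everything outside). -/
def IsAztecTiling (n : ℕ) (m : Pt → Pt) : Prop :=
  (∀ c, aztecCell n c → aztecCell n (m c) ∧ adjCell c (m c) ∧ m (m c) = c) ∧
  ∀ c, ¬ aztecCell n c → m c = c

/-- The number of domino tilings of the Aztec diamond of order `n`. -/
noncomputable def aztecTilingCount (n : ℕ) : ℕ := Nat.card {m : Pt → Pt // IsAztecTiling n m}

/-- The map sending `(π₁,…,π_{n-1})` to `(μ₀,…,μ_{n-1})` with `μ₀` the empty path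
at the origin and `μᵢ = U πᵢ D`. -/
def extendStar {n : ℕ} (π : Fin (n - 1) → List Pt) (i : Fin n) : List Pt :=
  if h : (i : ℕ) = 0 then []
  else (1, 1) :: π ⟨(i : ℕ) - 1, by omega⟩ ++ [(1, -1)]

/-!
Every Schröder step moves to the right and keeps `x + y` even, so a point of `μ i` on the x-axis
is `(2k, 0)` with `|k| ≤ i`. If `|k| < i` it is an endpoint of `μ |k|`, which non-intersection
forbids; hence the only axis points of `μ i` are its endpoints `(±2i, 0)`, and a level step
between two of them would have length `4i ≠ 2`.
-/

def schroderCone : AddSubmonoid Pt where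
  carrier := {v | 0 ≤ v.1 ∧ Even (v.1 + v.2)}
  zero_mem' := by simp
  add_mem' := by
    rintro a b ⟨ha₀, ha⟩ ⟨hb₀, hb⟩
    refine ⟨add_nonneg ha₀ hb₀, ?_⟩
    simpa only [Prod.fst_add, Prod.snd_add, add_add_add_comm] using ha.add hb

lemma mem_schroderCone_of_step {s : Pt} (hs : s = (1, 1) ∨ s = (1, -1) ∨ s = (2, 0)) :
    s ∈ schroderCone := by
  rcases hs with rfl | rfl | rfl <;> exact ⟨by norm_num, by decide⟩

lemma endpt_eq_add_sum (p : Pt) (l : List Pt) : endpt p l = p + l.sum := by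
  induction l generalizing p with
  | nil => simp [endpt]
  | cons s l ih =>
    change endpt (p + s) l = _
    rw [ih, List.sum_cons, add_assoc]

lemma mem_pts_iff {p v : Pt} {l : List Pt} : v ∈ pts p l ↔ ∃ k, endpt p (l.take k) = v := by
  simp only [pts, List.mem_iff_getElem, List.getElem_scanl, List.length_scanl]
  constructor
  · rintro ⟨k, -, rfl⟩
    exact ⟨k, rfl⟩
  · rintro ⟨k, rfl⟩
    exact ⟨min k l.length, by omega, by rw [← List.take_eq_take_min]; rfl⟩

lemma endpt_take_mem_pts (p : Pt) (l : List Pt) (k : ℕ) : endpt p (l.take k) ∈ pts p l :=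
  mem_pts_iff.2 ⟨k, rfl⟩

lemma start_mem_pts (p : Pt) (l : List Pt) : p ∈ pts p l :=
  endpt_take_mem_pts p l 0

lemma IsLargePath.end_mem_pts {p q : Pt} {l : List Pt} (h : IsLargePath p q l) : q ∈ pts p l := by
  simpa [h.2.2] using endpt_take_mem_pts p l l.length

lemma IsLargePath.sub_mem_schroderCone {p q v : Pt} {l : List Pt} (h : IsLargePath p q l)
    (hv : v ∈ pts p l) : v - p ∈ schroderCone ∧ q - v ∈ schroderCone := by
  obtain ⟨hsteps, -, rfl⟩ := h
  obtain ⟨k, rfl⟩ := mem_pts_iff.1 hv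
  have hcone (l' : List Pt) (hl' : l' ⊆ l) : l'.sum ∈ schroderCone :=
    schroderCone.list_sum_mem fun s hs => mem_schroderCone_of_step (hsteps s (hl' hs))
  simp only [endpt_eq_add_sum, ← List.sum_take_add_sum_drop l k, add_sub_cancel_left,
    ← add_assoc]
  exact ⟨hcone _ (List.take_subset k l), hcone _ (List.drop_subset k l)⟩

lemma eq_neg_or_eq_of_axis_mem_pts {n : ℕ} {μ : Fin n → List Pt}
    (hμ : μ ∈ PiStarSet n) (i : Fin n) {x : ℤ}
    (hx : (x, 0) ∈ pts (-(2 * (i : ℤ)), 0) (μ i)) :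
    x = -(2 * (i : ℤ)) ∨ x = 2 * (i : ℤ) := by
  obtain ⟨⟨hleft, ⟨m, hm⟩⟩, hright, -⟩ := (hμ.1 i).sub_mem_schroderCone hx
  simp only [Prod.fst_sub, Prod.snd_sub, sub_zero, sub_neg_eq_add, add_zero] at hleft hm hright
  by_contra hinner
  obtain ⟨j, hj_def⟩ : ∃ j : ℕ, j = (m - i).natAbs := ⟨_, rfl⟩
  have hj : j < n := by omega
  refine hμ.2 i ⟨j, hj⟩ (fun h => by simp only [Fin.ext_iff] at h; omega) _ hx ?_
  rcases le_or_gt 0 (m - i) with hnonneg | hneg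
  · rw [show x = 2 * ((⟨j, hj⟩ : Fin n) : ℤ) by rw [Fin.val_mk]; omega]
    exact (hμ.1 _).end_mem_pts
  · rw [show x = -(2 * ((⟨j, hj⟩ : Fin n) : ℤ)) by rw [Fin.val_mk]; omega]
    exact start_mem_pts _ _

lemma isSmallPath_of_mem_piStarSet {n : ℕ} {μ : Fin n → List Pt} (hμ : μ ∈ PiStarSet n)
    (i : Fin n) : IsSmallPath (-(2 * (i : ℤ)), 0) (2 * (i : ℤ), 0) (μ i) := by
  refine ⟨hμ.1 i, fun t ht hlevel hy => ?_⟩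
  set a := endpt (-(2 * (i : ℤ)), 0) ((μ i).take t)
  have hstep : endpt (-(2 * (i : ℤ)), 0) ((μ i).take (t + 1)) = (a.1 + 2, 0) := by
    simp only [a, endpt_eq_add_sum, List.sum_take_succ _ _ ht,
      show (μ i)[t] = (2, 0) from hlevel] at hy ⊢
    ext <;> simp_all [add_assoc]
  have hfrom := eq_neg_or_eq_of_axis_mem_pts hμ i (x := a.1) <| by
    rw [show ((a.1, 0) : Pt) = a from Prod.ext rfl hy.symm]
    exact endpt_take_mem_pts _ _ t
  have hto := eq_neg_or_eq_of_axis_mem_pts hμ i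
    (hstep ▸ endpt_take_mem_pts _ _ (t + 1))
  omega

/-- `Π_n^* = Ω_n^*`: every tuple of pairwise non-intersecting large Schröder
paths with `μ_i` from `(-2i,0)` to `(2i,0)` consists of small Schröder paths. -/
theorem piStar_eq_omegaStar (n : ℕ) :
    PiStarSet n = OmegaStarSet n := by
  ext μ
  exact ⟨fun hμ => ⟨isSmallPath_of_mem_piStarSet hμ, hμ.2⟩,
    fun hμ => ⟨fun i => (hμ.1 i).1, hμ.2⟩⟩
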